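/- arXiv:2405.05290 — 5 statements merged into one kernel-verified Lean document; each statement's English description precedes it below -/
import Mathlib

section
/- Let α, β ∈ [0,1] and 0 < s ≤ t. For every real x with s ≤ x ≤ t, (1-α) + αx ≤ λ x^β, where λ = max{(1-α)t^{-β} + α t^{1-β}, (1-α)s^{-β} + α s^{1-β}}. -/
/-!
At the endpoints `y = s, t` the weighted mean `(1-α) y^{-β} + α y^{1-β}` times `y^β` is exactly
`(1-α) + α y`, so `λ x^β` dominates the affine left-hand side at `x = s` and `x = t`. Since
`x^β` is concave and `λ ≥ 0`, the difference `λ x^β - ((1-α) + α x)` is concave, hence on `[s, t]`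
it is bounded below by its values at the endpoints.
-/

open Set Real

lemma add_mul_le_mul_rpow_of_endpoints {a b M β s t x : ℝ} (hM : 0 ≤ M) (hβ0 : 0 ≤ β)
    (hβ1 : β ≤ 1) (hs : 0 ≤ s) (hsx : s ≤ x) (hxt : x ≤ t)
    (hs_le : a + b * s ≤ M * s ^ β) (ht_le : a + b * t ≤ M * t ^ β) :
    a + b * x ≤ M * x ^ β := by
  have hconc : ConcaveOn ℝ (Ici 0) fun y : ℝ => M * y ^ β - (b * y + a) :=
    ((concaveOn_rpow hβ0 hβ1).smul hM).sub
      (((LinearMap.mul ℝ ℝ b).convexOn (convex_Ici 0)).add_const a)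
  have hmin := hconc.min_le_of_mem_Icc (mem_Ici.2 hs) (mem_Ici.2 (hs.trans (hsx.trans hxt)))
    ⟨hsx, hxt⟩
  suffices 0 ≤ M * x ^ β - (b * x + a) by linarith
  exact hmin.trans' (le_min (by linarith) (by linarith))

lemma mul_rpow_neg_add_mul_rpow_one_sub_mul_rpow {y : ℝ} (hy : 0 < y) (a b β : ℝ) :
    (a * y ^ (-β) + b * y ^ (1 - β)) * y ^ β = a + b * y := by
  rw [add_mul, mul_assoc, mul_assoc, ← rpow_add hy, ← rpow_add hy]
  norm_num

theorem scalar_weighted_bound_general (α β s t x : ℝ) (hα0 : 0 ≤ α) (hα1 : α ≤ 1)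
    (hβ0 : 0 ≤ β) (hβ1 : β ≤ 1) (hs : 0 < s) (hsx : s ≤ x) (hxt : x ≤ t) :
    (1 - α) + α * x ≤
      max ((1 - α) * t ^ (-β) + α * t ^ (1 - β)) ((1 - α) * s ^ (-β) + α * s ^ (1 - β))
        * x ^ β := by
  have ht : 0 < t := hs.trans_le (hsx.trans hxt)
  have hα1' : 0 ≤ 1 - α := sub_nonneg.2 hα1
  refine add_mul_le_mul_rpow_of_endpoints ?_ hβ0 hβ1 hs.le hsx hxt ?_ ?_
  · exact (le_max_right _ _).trans' (by positivity)
  · rw [← mul_rpow_neg_add_mul_rpow_one_sub_mul_rpow hs]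
    gcongr
    exact le_max_right _ _
  · rw [← mul_rpow_neg_add_mul_rpow_one_sub_mul_rpow ht]
    gcongr
    exact le_max_left _ _

/-- For `α, β ∈ [0,1]`, `0 < s ≤ t` and `s ≤ x ≤ t` one has `(1-α) + αx ≤ λ x^β` with
`λ = max{t^{-β} ∇_α t^{1-β}, s^{-β} ∇_α s^{1-β}}`. -/
theorem scalar_weighted_bound (α β s t x : ℝ) (hα0 : 0 ≤ α) (hα1 : α ≤ 1)
    (hβ0 : 0 ≤ β) (hβ1 : β ≤ 1) (hs : 0 < s) (hst : s ≤ t) (hsx : s ≤ x) (hxt : x ≤ t) :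
    (1 - α) + α * x ≤
      max ((1 - α) * t ^ (-β) + α * t ^ (1 - β)) ((1 - α) * s ^ (-β) + α * s ^ (1 - β))
        * x ^ β :=
  scalar_weighted_bound_general α β s t x hα0 hα1 hβ0 hβ1 hs hsx hxt
end

section
/- Let A and B be positive invertible operators on a Hilbert space with sA ≤ B ≤ tA for some scalars 0 < s ≤ t, and let α, β ∈ [0,1]. Then A ∇_α B ≤ λ (A ♯_β B), where λ = max{(1-α)t^{-β} + α t^{1-β}, (1-α)s^{-β} + α s^{1-β}}. -/
/-!
Congruence by `A^{-1/2}` turns `sA ≤ B ≤ tA` into `s ≤ C ≤ t` for `C = A^{-1/2} B A^{-1/2}`, and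
congruence by `A^{1/2}` turns `(1-α) + αC ≤ λ C^β` back into the claim. The latter is a scalar
inequality on the spectrum of `C ⊆ [s, t]`: `λ x^β - ((1-α) + αx)` is concave, so it is nonnegative
on `[s, t]` once it is at the endpoints, and `λ` is chosen exactly so that it is.
-/

open scoped ComplexOrder

/-- `A ^ r` for a Hermitian matrix, via the continuous functional calculus. -/
noncomputable def mpow {n : ℕ} (A : Matrix (Fin n) (Fin n) ℂ) (r : ℝ) : Matrix (Fin n) (Fin n) ℂ :=
  cfc (fun x : ℝ => x ^ r) A

/-- The β-weighted operator geometric mean `A ♯_β B = A^{1/2}(A^{-1/2} B A^{-1/2})^β A^{1/2}`. -/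
noncomputable def geomMean {n : ℕ} (A B : Matrix (Fin n) (Fin n) ℂ) (β : ℝ) :
    Matrix (Fin n) (Fin n) ℂ :=
  mpow A (1/2) * mpow (mpow A (-(1/2)) * B * mpow A (-(1/2))) β * mpow A (1/2)

/-- The α-weighted operator harmonic mean `A !_α B = ((1-α)A⁻¹ + αB⁻¹)⁻¹`. -/
noncomputable def harmMean {n : ℕ} (A B : Matrix (Fin n) (Fin n) ℂ) (α : ℝ) :
    Matrix (Fin n) (Fin n) ℂ :=
  ((1 - α) • A⁻¹ + α • B⁻¹)⁻¹

open Set MatrixOrder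

lemma add_mul_le_mul_rpow_of_mem_Icc {a b L β s t x : ℝ} (hs : 0 ≤ s) (hβ0 : 0 ≤ β)
    (hβ1 : β ≤ 1) (hL : 0 ≤ L) (h_s : a + b * s ≤ L * s ^ β) (h_t : a + b * t ≤ L * t ^ β)
    (hx : x ∈ Icc s t) : a + b * x ≤ L * x ^ β := by
  have hconc : ConcaveOn ℝ (Ici 0) fun y : ℝ => L * y ^ β - (a + b * y) := by
    have := ((Real.concaveOn_rpow hβ0 hβ1).smul hL).sub
      (((LinearMap.mul ℝ ℝ b).convexOn (convex_Ici 0)).add_const a)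
    simpa [Pi.sub_def, add_comm] using this
  have := hconc.min_le_of_mem_Icc hs (hs.trans (hx.1.trans hx.2)) hx
  have : 0 ≤ min (L * s ^ β - (a + b * s)) (L * t ^ β - (a + b * t)) :=
    le_min (by linarith) (by linarith)
  linarith

lemma rpow_neg_add_rpow_one_sub_mul_rpow {α β u : ℝ} (hu : 0 < u) :
    ((1 - α) * u ^ (-β) + α * u ^ (1 - β)) * u ^ β = (1 - α) + α * u := by
  rw [add_mul, mul_assoc, mul_assoc, ← Real.rpow_add hu, ← Real.rpow_add hu]
  simp

lemma one_sub_add_mul_le_max_mul_rpow {s t α β x : ℝ} (hα0 : 0 ≤ α) (hα1 : α ≤ 1)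
    (hβ0 : 0 ≤ β) (hβ1 : β ≤ 1) (hs : 0 < s) (hx : x ∈ Icc s t) :
    (1 - α) + α * x ≤
      max ((1 - α) * t ^ (-β) + α * t ^ (1 - β)) ((1 - α) * s ^ (-β) + α * s ^ (1 - β))
        * x ^ β := by
  have ht : 0 < t := hs.trans_le (hx.1.trans hx.2)
  refine add_mul_le_mul_rpow_of_mem_Icc hs.le hβ0 hβ1 ?_ ?_ ?_ hx
  · exact le_max_of_le_right (by positivity)
  · rw [← rpow_neg_add_rpow_one_sub_mul_rpow hs]
    gcongr
    exact le_max_right _ _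
  · rw [← rpow_neg_add_rpow_one_sub_mul_rpow ht]
    gcongr
    exact le_max_left _ _

lemma continuousOn_real_spectrum {n : ℕ} (f : ℝ → ℝ) (A : Matrix (Fin n) (Fin n) ℂ) :
    ContinuousOn f (spectrum ℝ A) :=
  Matrix.finite_real_spectrum.continuousOn f

section
variable {n : ℕ} {A : Matrix (Fin n) (Fin n) ℂ}

lemma isSelfAdjoint_mpow (A : Matrix (Fin n) (Fin n) ℂ) (r : ℝ) : IsSelfAdjoint (mpow A r) :=
  cfc_predicate _ A

lemma mpow_one (hA : A.IsHermitian) : mpow A 1 = A := by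
  simp only [mpow, Real.rpow_one]
  exact cfc_id' ℝ A

lemma mpow_zero (hA : A.IsHermitian) : mpow A 0 = 1 := by
  simp only [mpow, Real.rpow_zero]
  exact cfc_const_one ℝ A

lemma mpow_mul_mpow (hA : A.PosDef) (r p : ℝ) : mpow A r * mpow A p = mpow A (r + p) := by
  rw [mpow, mpow, mpow, ← cfc_mul _ _ A (continuousOn_real_spectrum _ A)
    (continuousOn_real_spectrum _ A)]
  refine cfc_congr fun x hx => (Real.rpow_add ?_ r p).symm
  rw [hA.isHermitian.spectrum_real_eq_range_eigenvalues] at hx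
  obtain ⟨i, rfl⟩ := hx
  exact hA.eigenvalues_pos i

lemma one_sub_smul_one_add_smul_le_smul_mpow {C : Matrix (Fin n) (Fin n) ℂ} {s t α β L : ℝ}
    (hC : C.IsHermitian) (hsC : s • 1 ≤ C) (hCt : C ≤ t • 1)
    (h : ∀ x ∈ Icc s t, (1 - α) + α * x ≤ L * x ^ β) :
    (1 - α) • 1 + α • C ≤ L • mpow C β := by
  have hspec : spectrum ℝ C ⊆ Icc s t := fun x hx =>
    ⟨(algebraMap_le_iff_le_spectrum hC.isSelfAdjoint).1
      (by rwa [Algebra.algebraMap_eq_smul_one]) x hx,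
     (le_algebraMap_iff_spectrum_le hC.isSelfAdjoint).1
      (by rwa [Algebra.algebraMap_eq_smul_one]) x hx⟩
  have := cfc_mono (fun x hx => h x (hspec hx)) (continuousOn_real_spectrum _ C)
    (continuousOn_real_spectrum _ C)
  rwa [cfc_const_add _ _ _ (continuousOn_real_spectrum _ C), cfc_const_mul_id α C hC.isSelfAdjoint,
    cfc_const_mul _ _ _ (continuousOn_real_spectrum _ C), Algebra.algebraMap_eq_smul_one] at this

end

theorem arith_le_geom_general {n : ℕ} (A B : Matrix (Fin n) (Fin n) ℂ) (s t α β : ℝ)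
    (hA : A.PosDef) (hB : B.PosDef) (hs : 0 < s)
    (hsA : (B - s • A).PosSemidef) (hBt : (t • A - B).PosSemidef)
    (hα0 : 0 ≤ α) (hα1 : α ≤ 1) (hβ0 : 0 ≤ β) (hβ1 : β ≤ 1) :
    (max ((1 - α) * t ^ (-β) + α * t ^ (1 - β)) ((1 - α) * s ^ (-β) + α * s ^ (1 - β))
        • geomMean A B β - ((1 - α) • A + α • B)).PosSemidef := by
  set X := mpow A (1/2)
  set Y := mpow A (-(1/2))
  have hXX : X * X = A := by rw [mpow_mul_mpow hA]; norm_num [mpow_one hA.isHermitian]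
  have hXY : X * Y = 1 := by rw [mpow_mul_mpow hA]; norm_num [mpow_zero hA.isHermitian]
  have hYX : Y * X = 1 := by rw [mpow_mul_mpow hA]; norm_num [mpow_zero hA.isHermitian]
  have hYAY : Y * A * Y = 1 := by rw [← hXX, ← mul_assoc Y X X, hYX, one_mul, hXY]
  set C := Y * B * Y
  have hC : C.IsHermitian := hB.isHermitian.isSelfAdjoint.conjugate_self (isSelfAdjoint_mpow A _)
  have hsC : s • 1 ≤ C := by
    have := (isSelfAdjoint_mpow A (-(1/2))).conjugate_le_conjugate (Matrix.le_iff.2 hsA)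
    rwa [mul_smul_comm, smul_mul_assoc, hYAY] at this
  have hCt : C ≤ t • 1 := by
    have := (isSelfAdjoint_mpow A (-(1/2))).conjugate_le_conjugate (Matrix.le_iff.2 hBt)
    rwa [mul_smul_comm, smul_mul_assoc, hYAY] at this
  have hconj := (isSelfAdjoint_mpow A (1/2)).conjugate_le_conjugate
    (one_sub_smul_one_add_smul_le_smul_mpow hC hsC hCt
      fun x hx => one_sub_add_mul_le_max_mul_rpow hα0 hα1 hβ0 hβ1 hs hx)
  have hXCX : X * C * X = B := by
    rw [← mul_assoc, ← mul_assoc, hXY, one_mul, mul_assoc, hYX, mul_one]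
  rw [← Matrix.le_iff, geomMean]
  rwa [mul_add, add_mul, mul_smul_comm, smul_mul_assoc, mul_one, hXX, mul_smul_comm, smul_mul_assoc,
    hXCX, mul_smul_comm, smul_mul_assoc] at hconj

/-- If `0 < sA ≤ B ≤ tA`, then `A ∇_α B ≤ λ (A ♯_β B)`. -/
theorem arith_le_geom {n : ℕ} (A B : Matrix (Fin n) (Fin n) ℂ) (s t α β : ℝ)
    (hA : A.PosDef) (hB : B.PosDef) (hs : 0 < s) (hst : s ≤ t)
    (hsA : (B - s • A).PosSemidef) (hBt : (t • A - B).PosSemidef)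
    (hα0 : 0 ≤ α) (hα1 : α ≤ 1) (hβ0 : 0 ≤ β) (hβ1 : β ≤ 1) :
    (max ((1 - α) * t ^ (-β) + α * t ^ (1 - β)) ((1 - α) * s ^ (-β) + α * s ^ (1 - β))
        • geomMean A B β - ((1 - α) • A + α • B)).PosSemidef :=
  arith_le_geom_general A B s t α β hA hB hs hsA hBt hα0 hα1 hβ0 hβ1
end

section
/- For every x > 0 and α ∈ [0,1], 1 ≤ (1-α)x^{-α} + α x^{1-α} ≤ S(x), where S(x) = x^{1/(x-1)} / (e · log(x^{1/(x-1)})) for x ≠ 1 and S(1) = 1 is the Specht ratio. -/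
/-- The Specht ratio `S(x) = x^{1/(x-1)} / (e log x^{1/(x-1)})`, with `S(1) = 1`. -/
noncomputable def specht (x : ℝ) : ℝ :=
  if x = 1 then 1
  else x ^ ((1 : ℝ) / (x - 1)) / (Real.exp 1 * Real.log (x ^ ((1 : ℝ) / (x - 1))))

/-- For `x > 0` and `α ∈ [0,1]`, `1 ≤ (1-α)x^{-α} + αx^{1-α} ≤ S(x)`. -/
theorem specht_bound (x α : ℝ) (hx : 0 < x) (hα0 : 0 ≤ α) (hα1 : α ≤ 1) :
    1 ≤ (1 - α) * x ^ (-α) + α * x ^ (1 - α) ∧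
      (1 - α) * x ^ (-α) + α * x ^ (1 - α) ≤ specht x := by
  have h1 : x ^ (1 - α) = x ^ (-α) * x := by
    rw [show (1 : ℝ) - α = -α + 1 by ring, Real.rpow_add_one hx.ne']
  set u : ℝ := 1 + α * (x - 1) with hu
  have hsplit : (1 - α) * x ^ (-α) + α * x ^ (1 - α) = x ^ (-α) * u := by
    rw [h1, hu]; ring
  have hupos : 0 < u := by
    rcases hα0.eq_or_lt with h | h
    · simp [hu, ← h]
    · nlinarith [mul_pos h hx]
  constructor
  · -- lower bound
    have hg : (1 : ℝ) ^ (1 - α) * x ^ α ≤ (1 - α) * 1 + α * x :=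
      Real.geom_mean_le_arith_mean2_weighted (by linarith) hα0 zero_le_one hx.le (by ring)
    rw [Real.one_rpow, one_mul] at hg
    have hxu : x ^ α ≤ u := by rw [hu]; linarith
    have hmul : x ^ (-α) * x ^ α ≤ x ^ (-α) * u :=
      mul_le_mul_of_nonneg_left hxu (Real.rpow_nonneg hx.le _)
    rw [← Real.rpow_add hx] at hmul
    simpa [hsplit] using hmul
  · -- upper bound
    rcases eq_or_ne x 1 with hx1 | hx1
    · subst hx1
      simp [specht, hsplit, hu]
    · set t : ℝ := Real.log x with htdef
      have ht : t ≠ 0 := Real.log_ne_zero_of_pos_of_ne_one hx hx1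
      have hd : x - 1 ≠ 0 := sub_ne_zero.mpr hx1
      set a : ℝ := (x - 1) / t with hadef
      have ha : 0 < a := by
        rcases lt_or_gt_of_ne hx1 with h | h
        · exact div_pos_of_neg_of_neg (by linarith) (Real.log_neg hx h)
        · exact div_pos (by linarith) (Real.log_pos h)
      have hua : u / a = t / (x - 1) + α * t := by
        rw [hu, hadef]; field_simp
      have key : u / a ≤ Real.exp (u / a - 1) := by
        have := Real.add_one_le_exp (u / a - 1); linarith
      have key2 : u ≤ Real.exp (t / (x - 1) + α * t - 1) * a := by
        rw [← hua]; exact (div_le_iff₀ ha).mp key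
      have hrpow : ∀ y : ℝ, x ^ y = Real.exp (t * y) := fun y =>
        Real.rpow_def_of_pos hx y
      have hspecht : specht x = x ^ ((1 : ℝ) / (x - 1)) / (Real.exp 1 * (1 / (x - 1) * t)) := by
        rw [specht, if_neg hx1, Real.log_rpow hx]
      rw [hsplit, hspecht, hrpow, hrpow]
      calc Real.exp (t * -α) * u
          ≤ Real.exp (t * -α) * (Real.exp (t / (x - 1) + α * t - 1) * a) :=
            mul_le_mul_of_nonneg_left key2 (Real.exp_nonneg _)
        _ = Real.exp (t * -α + (t / (x - 1) + α * t - 1)) * a := by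
            rw [Real.exp_add]; ring
        _ = Real.exp (t / (x - 1) - 1) * a := by ring_nf
        _ = Real.exp (t * (1 / (x - 1))) / (Real.exp 1 * (1 / (x - 1) * t)) := by
            rw [Real.exp_sub, hadef]
            field_simp
end

section
/- Let α ∈ [0,1] and 0 < s ≤ t. Then max{(1-α)t^{-α} + α t^{1-α}, (1-α)s^{-α} + α s^{1-α}} ≤ max{S(s), S(t)}, where S is the Specht ratio. -/
lemma scalar_le_specht (α x : ℝ) (hα0 : 0 ≤ α) (hα1 : α ≤ 1) (hx : 0 < x) :
    (1 - α) * x ^ (-α) + α * x ^ (1 - α) ≤ specht x := by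
  have hsplit : x ^ (1 - α) = x * x ^ (-α) := by
    rw [show (1 : ℝ) - α = 1 + (-α) by ring, Real.rpow_add hx, Real.rpow_one]
  have hLHS : (1 - α) * x ^ (-α) + α * x ^ (1 - α) = (1 + α * (x - 1)) * x ^ (-α) := by
    rw [hsplit]; ring
  rw [hLHS]
  by_cases hx1 : x = 1
  · subst hx1
    simp [specht]
  · unfold specht
    rw [if_neg hx1]
    set b : ℝ := x ^ ((1 : ℝ) / (x - 1)) with hb
    have hbpos : 0 < b := Real.rpow_pos_of_pos hx _
    have hlogb : Real.log b = Real.log x / (x - 1) := by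
      rw [hb, Real.log_rpow hx]; ring
    have hc : 0 < Real.log b := by
      rw [hlogb]
      rcases lt_or_gt_of_ne (fun h : x = 1 => hx1 h) with h | h
      · apply div_pos_of_neg_of_neg
        · exact Real.log_neg hx h
        · linarith
      · apply div_pos
        · exact Real.log_pos h
        · linarith
    set c : ℝ := Real.log b with hc'
    set A : ℝ := 1 + α * (x - 1) with hA
    -- A * c ≤ exp (A * c) / e
    have h1 : A * c ≤ Real.exp (A * c - 1) := by
      have := Real.add_one_le_exp (A * c - 1)
      linarith
    have h2 : A ≤ Real.exp (A * c) / (Real.exp 1 * c) := by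
      rw [Real.exp_sub] at h1
      rw [le_div_iff₀ (by positivity)]
      calc A * (Real.exp 1 * c) = (A * c) * Real.exp 1 := by ring
        _ ≤ (Real.exp (A * c) / Real.exp 1) * Real.exp 1 := by
            apply mul_le_mul_of_nonneg_right h1 (Real.exp_pos 1).le
        _ = Real.exp (A * c) := by field_simp
    -- exp (A * c) = b * x ^ α
    have h3 : Real.exp (A * c) = b * x ^ α := by
      have hxc : (x - 1) * c = Real.log x := by
        rw [hlogb]
        field_simp [sub_ne_zero.mpr hx1]
      have : A * c = c + α * Real.log x := by
        rw [hA]; rw [← hxc]; ring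
      rw [this, Real.exp_add, Real.exp_log hbpos, Real.rpow_def_of_pos hx, mul_comm α]
    -- combine
    have hxna : 0 < x ^ (-α) := Real.rpow_pos_of_pos hx _
    calc A * x ^ (-α) ≤ (Real.exp (A * c) / (Real.exp 1 * c)) * x ^ (-α) :=
          mul_le_mul_of_nonneg_right h2 hxna.le
      _ = b * (x ^ α * x ^ (-α)) / (Real.exp 1 * c) := by rw [h3]; ring
      _ = b / (Real.exp 1 * c) := by
          rw [← Real.rpow_add hx, add_neg_cancel, Real.rpow_zero, mul_one]

/-- `max{t^{-α} ∇_α t^{1-α}, s^{-α} ∇_α s^{1-α}} ≤ max{S(s), S(t)}`. -/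
theorem max_le_specht (α s t : ℝ) (hα0 : 0 ≤ α) (hα1 : α ≤ 1) (hs : 0 < s) (hst : s ≤ t) :
    max ((1 - α) * t ^ (-α) + α * t ^ (1 - α)) ((1 - α) * s ^ (-α) + α * s ^ (1 - α)) ≤
      max (specht s) (specht t) := by
  have ht : 0 < t := lt_of_lt_of_le hs hst
  apply max_le
  · exact le_trans (scalar_le_specht α t hα0 hα1 ht) (le_max_right _ _)
  · exact le_trans (scalar_le_specht α s hα0 hα1 hs) (le_max_left _ _)
end

section
/- For every x > 0, the matrix built from f(x) = arcsinh(x) = log(x + √(x²+1)) is Kwong on (0,∞): for any distinct positive reals x₁,…,xₙ, the matrix [(arcsinh(xᵢ)+arcsinh(xⱼ))/(xᵢ+xⱼ)] is positive semidefinite. -/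
/-!
Writing `arsinh x = ∫₀¹ x (1 + s²x²)^{-1/2} ds` exhibits the matrix as an integral over `s ∈ (0,1]`
of the corresponding matrices of `φ(t) = t / √(1 + t²)` at the points `s xᵢ`, so it suffices that
`φ` is Kwong. With `cᵢ = √(1 + xᵢ²)` and `Uᵢ = xᵢ + cᵢ = exp (arsinh xᵢ)`, the entries of the matrix
of `φ` are `cᵢ⁻¹ (UᵢUⱼ + 1) / (Uᵢ + Uⱼ) cⱼ⁻¹`, a diagonal congruence of the sum of the Cauchy
matrix `[1 / (Uᵢ + Uⱼ)]` and its congruence by `diag U`. The Cauchy matrix is positive semidefinite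
because `1 / (a + b) = ∫₀^∞ e^{-aτ} e^{-bτ} dτ`.
-/

open Real MeasureTheory Set Matrix

variable {ι : Type*} [Fintype ι]

noncomputable def kwongMatrix (f : ℝ → ℝ) (x : ι → ℝ) : Matrix ι ι ℝ :=
  of fun i j => (f (x i) + f (x j)) / (x i + x j)

lemma star_dotProduct_mulVec_eq_sum (M : Matrix ι ι ℝ) (v : ι → ℝ) :
    star v ⬝ᵥ (M *ᵥ v) = ∑ i, ∑ j, v i * M i j * v j := by
  simp [dotProduct, mulVec, Finset.mul_sum, mul_assoc]

lemma Matrix.PosSemidef.diagonal_mul_mul_diagonal [DecidableEq ι] {M : Matrix ι ι ℝ}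
    (hM : M.PosSemidef) (w : ι → ℝ) : (diagonal w * M * diagonal w).PosSemidef := by
  simpa using hM.conjTranspose_mul_mul_same (diagonal w)

lemma posSemidef_of_integral {α : Type*} [MeasurableSpace α] {μ : Measure α}
    {A : α → Matrix ι ι ℝ} (hint : ∀ i j, Integrable (fun a => A a i j) μ)
    (hA : ∀ᵐ a ∂μ, (A a).PosSemidef) :
    (of fun i j => ∫ a, A a i j ∂μ).PosSemidef := by
  refine .of_dotProduct_mulVec_nonneg ?_ fun v => ?_
  · ext i j
    refine integral_congr_ae ?_
    filter_upwards [hA] with a ha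
    exact congrFun (congrFun ha.isHermitian i) j
  · have hquad : star v ⬝ᵥ ((of fun i j => ∫ a, A a i j ∂μ) *ᵥ v)
        = ∫ a, star v ⬝ᵥ (A a *ᵥ v) ∂μ := by
      simp only [star_dotProduct_mulVec_eq_sum, of_apply]
      rw [integral_finsetSum _ fun i _ => integrable_finsetSum _ fun j _ =>
        ((hint i j).const_mul _).mul_const _]
      refine Finset.sum_congr rfl fun i _ => ?_
      rw [integral_finsetSum _ fun j _ => ((hint i j).const_mul _).mul_const _]
      simp only [integral_mul_const, integral_const_mul]
    rw [hquad]
    exact integral_nonneg_of_ae (hA.mono fun a ha => ha.dotProduct_mulVec_nonneg v)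

lemma exp_neg_mul_mul_exp_neg_mul (a b τ : ℝ) :
    exp (-(a * τ)) * exp (-(b * τ)) = exp (-((a + b) * τ)) := by
  rw [← exp_add]; ring_nf

lemma integrableOn_exp_neg_mul_Ioi {c : ℝ} (hc : 0 < c) :
    IntegrableOn (fun τ => exp (-(c * τ))) (Ioi 0) := by
  simpa only [neg_mul] using exp_neg_integrableOn_Ioi 0 hc

lemma integral_exp_neg_mul_Ioi {c : ℝ} (hc : 0 < c) :
    ∫ τ in Ioi (0 : ℝ), exp (-(c * τ)) = c⁻¹ := by
  simpa only [mul_zero, integral_exp_neg_Ioi, neg_zero, exp_zero, smul_eq_mul, mul_one]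
    using integral_comp_mul_left_Ioi (fun τ => exp (-τ)) 0 hc

lemma posSemidef_inv_add {u : ι → ℝ} (hu : ∀ i, 0 < u i) :
    (of fun i j => (u i + u j)⁻¹).PosSemidef := by
  have hpos : ∀ i j, 0 < u i + u j := fun i j => add_pos (hu i) (hu j)
  have := posSemidef_of_integral (μ := volume.restrict (Ioi 0))
    (A := fun τ => vecMulVec (fun i => exp (-(u i * τ))) (fun i => exp (-(u i * τ))))
    (fun i j => by
      simp only [vecMulVec_apply, exp_neg_mul_mul_exp_neg_mul]
      exact integrableOn_exp_neg_mul_Ioi (hpos i j))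
    (.of_forall fun τ => posSemidef_vecMulVec_self_star _)
  simpa only [vecMulVec_apply, exp_neg_mul_mul_exp_neg_mul, integral_exp_neg_mul_Ioi (hpos _ _)]
    using this

/-- With `t = sinh a`, `s = sinh b` this says `(tanh a + tanh b) / (sinh a + sinh b)
= (e^{a+b} + 1) / (cosh a cosh b (e^a + e^b))`. -/
lemma mul_inv_add_mul_inv_div_add {t s c d : ℝ} (hc : c ^ 2 = 1 + t ^ 2) (hd : d ^ 2 = 1 + s ^ 2)
    (hc0 : 0 < c) (hd0 : 0 < d) (hts : t + s ≠ 0) :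
    (t * c⁻¹ + s * d⁻¹) / (t + s) = c⁻¹ * (((t + c) * (s + d) + 1) / (t + c + (s + d))) * d⁻¹ := by
  have htc : 0 < t + c := by nlinarith
  have hsd : 0 < s + d := by nlinarith
  field_simp
  linear_combination t * hd + s * hc

lemma posSemidef_kwongMatrix_mul_inv_sqrt {x : ι → ℝ} (hx : ∀ i, 0 < x i) :
    (kwongMatrix (fun t => t * (√(1 + t ^ 2))⁻¹) x).PosSemidef := by
  classical
  set c : ι → ℝ := fun i => √(1 + x i ^ 2)
  have hc0 i : 0 < c i := sqrt_pos.2 (by positivity)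
  have hc i : c i ^ 2 = 1 + x i ^ 2 := sq_sqrt (by positivity)
  set U : ι → ℝ := fun i => x i + c i
  have hU i : 0 < U i := by nlinarith [hc i, hc0 i, hx i]
  have hC := posSemidef_inv_add hU
  convert ((hC.diagonal_mul_mul_diagonal U).add hC).diagonal_mul_mul_diagonal (c⁻¹) using 1
  ext i j
  simp only [kwongMatrix, of_apply, diagonal_mul, mul_diagonal, Matrix.add_apply, Pi.inv_apply, U]
  rw [mul_inv_add_mul_inv_div_add (hc i) (hc j) (hc0 i) (hc0 j) (add_pos (hx i) (hx j)).ne']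
  ring

lemma integral_mul_comp_mul_eq_sub {f f' : ℝ → ℝ} (hf : ∀ t, HasDerivAt f (f' t) t)
    (hf' : Continuous f') (a : ℝ) : ∫ s in (0 : ℝ)..1, a * f' (s * a) = f a - f 0 := by
  have hderiv s : HasDerivAt (fun s => f (s * a)) (a * f' (s * a)) s := by
    have h := (hf (s * a)).comp s ((hasDerivAt_id s).mul_const a)
    rwa [one_mul, mul_comm (f' _)] at h
  rw [intervalIntegral.integral_eq_sub_of_hasDerivAt (fun s _ => hderiv s)
    ((continuous_const.mul (hf'.comp (continuous_id.mul continuous_const))).intervalIntegrable _ _)]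
  simp

lemma posSemidef_kwongMatrix_of_hasDerivAt {f f' : ℝ → ℝ} (hf : ∀ t, HasDerivAt f (f' t) t)
    (hf' : Continuous f') (hf0 : f 0 = 0)
    (hg : ∀ y : ι → ℝ, (∀ i, 0 < y i) → (kwongMatrix (fun t => t * f' t) y).PosSemidef)
    {x : ι → ℝ} (hx : ∀ i, 0 < x i) : (kwongMatrix f x).PosSemidef := by
  set A : ℝ → Matrix ι ι ℝ := fun s =>
    of fun i j => (x i * f' (s * x i) + x j * f' (s * x j)) / (x i + x j)
  have hint i : IntegrableOn (fun s => x i * f' (s * x i)) (Ioc 0 1) :=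
    (continuous_const.mul (hf'.comp (continuous_id.mul continuous_const))).integrableOn_Ioc
  have hA s (hs : s ∈ Ioc (0 : ℝ) 1) : A s = kwongMatrix (fun t => t * f' t) (s • x) := by
    ext i j
    simp only [A, kwongMatrix, of_apply, Pi.smul_apply, smul_eq_mul]
    rw [← mul_div_mul_left _ _ hs.1.ne']
    ring
  have hentry i : ∫ s in Ioc 0 1, x i * f' (s * x i) = f (x i) := by
    rw [← intervalIntegral.integral_of_le zero_le_one, integral_mul_comp_mul_eq_sub hf hf', hf0,
      sub_zero]
  convert posSemidef_of_integral (μ := volume.restrict (Ioc 0 1)) (A := A)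
    (fun i j => ((hint i).add (hint j)).div_const _)
    ((ae_restrict_iff' measurableSet_Ioc).2 (.of_forall fun s hs =>
      hA s hs ▸ hg _ fun i => mul_pos hs.1 (hx i))) using 1
  ext i j
  simp only [A, kwongMatrix, of_apply]
  rw [integral_div, integral_add (hint i) (hint j), hentry, hentry]

theorem arcsinh_kwong_general (n : ℕ) (x : Fin n → ℝ) (hx : ∀ i, 0 < x i) :
    (Matrix.of fun i j => (Real.arsinh (x i) + Real.arsinh (x j)) / (x i + x j) :
      Matrix (Fin n) (Fin n) ℝ).PosSemidef := by
  have hderiv_cont : Continuous fun t : ℝ => (√(1 + t ^ 2))⁻¹ :=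
    (continuous_const.add (continuous_pow 2)).sqrt.inv₀ fun t =>
      (sqrt_pos.2 (add_pos_of_pos_of_nonneg one_pos (sq_nonneg t))).ne'
  exact posSemidef_kwongMatrix_of_hasDerivAt hasDerivAt_arsinh hderiv_cont arsinh_zero
    (fun _ => posSemidef_kwongMatrix_mul_inv_sqrt) hx

/-- `arcsinh` is a Kwong function on `(0,∞)`: for distinct positive reals `x₁,…,xₙ` the matrix
`[(arcsinh xᵢ + arcsinh xⱼ)/(xᵢ + xⱼ)]` is positive semidefinite. -/
theorem arcsinh_kwong (n : ℕ) (x : Fin n → ℝ) (hx : ∀ i, 0 < x i)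
    (hinj : Function.Injective x) :
    (Matrix.of fun i j => (Real.arsinh (x i) + Real.arsinh (x j)) / (x i + x j) :
      Matrix (Fin n) (Fin n) ℝ).PosSemidef :=
  arcsinh_kwong_general n x hx
end
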